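/- arXiv:2310.20253 — 3 statements merged into one kernel-verified Lean document; each statement's English description precedes it below -/
import Mathlib

section
/- Strong extensionality holds in ZF: let R : ZFSet → ZFSet → Prop be a binary relation and a, b : ZFSet such that R a b, and such that (forward clause) for all x, x', y, if x' ∈ x and R x y then there exists y' with y' ∈ y and R x' y', and (backward clause) for all y, y', x, if y' ∈ y and R x y then there exists x' with x' ∈ x and R x' y'. Then a = b. -/
/-- Strong extensionality holds in ZF. -/
theorem strong_extensionality (R : ZFSet → ZFSet → Prop) (a b : ZFSet)
    (hab : R a b)
    (hfwd : ∀ x x' y, x' ∈ x → R x y → ∃ y', y' ∈ y ∧ R x' y')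
    (hbwd : ∀ y y' x, y' ∈ y → R x y → ∃ x', x' ∈ x ∧ R x' y') :
    a = b := by
  induction a using ZFSet.inductionOn generalizing b with
  | _ a IH =>
    ext z
    constructor
    · intro hz
      obtain ⟨y, hy, hRy⟩ := hfwd a z b hz hab
      exact (IH z hz y hRy) ▸ hy
    · intro hz
      obtain ⟨x, hx, hRx⟩ := hbwd b z a hz hab
      exact (IH x hx z hRx) ▸ hx
end

section
/- If φ is a collapse of a graph A and G is an initial subgraph of A, then the restriction φ|_{Car(G)} := {c ∈ φ | the first component of c belongs to Car(G)} is a collapse of G. -/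
/-- `A` is a graph: all its elements are Kuratowski ordered pairs. -/
def IsGraph (A : ZFSet) : Prop := ∀ c ∈ A, ∃ x y, c = ZFSet.pair x y

/-- The carrier of a graph `A`. -/
def Car (A : ZFSet) : ZFSet :=
  ZFSet.sep (fun x => ∃ y, ZFSet.pair x y ∈ A ∨ ZFSet.pair y x ∈ A)
    (ZFSet.sUnion (ZFSet.sUnion A))

/-- `φ` is a ZF-function: a set of ordered pairs that is functional. -/
def IsFunc (φ : ZFSet) : Prop :=
  (∀ c ∈ φ, ∃ x y, c = ZFSet.pair x y) ∧
  ∀ x y y', ZFSet.pair x y ∈ φ → ZFSet.pair x y' ∈ φ → y = y'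

/-- Domain of a ZF-function. -/
def Dom (φ : ZFSet) : ZFSet :=
  ZFSet.sep (fun x => ∃ y, ZFSet.pair x y ∈ φ) (ZFSet.sUnion (ZFSet.sUnion φ))

/-- Codomain of a ZF-function. -/
def Cod (φ : ZFSet) : ZFSet :=
  ZFSet.sep (fun y => ∃ x, ZFSet.pair x y ∈ φ) (ZFSet.sUnion (ZFSet.sUnion φ))

/-- `φ` is a Mostowski collapse of the graph `A`. -/
def IsCollapse (A φ : ZFSet) : Prop :=
  IsFunc φ ∧ Dom φ = Car A ∧
  ∀ i y y', (y' ∈ y ∧ ZFSet.pair i y ∈ φ) ↔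
    ∃ i', ZFSet.pair i' i ∈ A ∧ ZFSet.pair i' y' ∈ φ

/-- The extended collapse `φ̂_A(i)`. -/
def hatApp (A φ i : ZFSet) : ZFSet :=
  ZFSet.sep (fun y => ∃ j, ZFSet.pair j i ∈ A ∧ ZFSet.pair j y ∈ φ) (Cod φ)

/-- `x` is a reification of the pointed graph `⟨A,a⟩`. -/
def IsReif (A a x : ZFSet) : Prop :=
  ∃ φ, IsCollapse A φ ∧ x = hatApp A φ a

/-- The pointed graphs `⟨A,a⟩` and `⟨B,b⟩` are bisimilar. -/
def Bisim (A a B b : ZFSet) : Prop :=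
  ∃ r : ZFSet, ZFSet.pair a b ∈ r ∧
    (∀ x x' y, ZFSet.pair x' x ∈ A → ZFSet.pair x y ∈ r →
      ∃ y', ZFSet.pair y' y ∈ B ∧ ZFSet.pair x' y' ∈ r) ∧
    (∀ y y' x, ZFSet.pair y' y ∈ B → ZFSet.pair x y ∈ r →
      ∃ x', ZFSet.pair x' x ∈ A ∧ ZFSet.pair x' y' ∈ r)

/-- `G` is an initial subgraph of `A`. -/
def ISeg (G A : ZFSet) : Prop :=
  IsGraph G ∧ G ⊆ A ∧ ∀ x y, ZFSet.pair x y ∈ A → y ∈ Car G → ZFSet.pair x y ∈ G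

/-- Restriction of a ZF-function to those pairs whose first component is in `D`. -/
def restrict (φ D : ZFSet) : ZFSet :=
  ZFSet.sep (fun c => ∃ u v, c = ZFSet.pair u v ∧ u ∈ D) φ

lemma pair_mem_uu_left {x y S : ZFSet} (h : ZFSet.pair x y ∈ S) :
    x ∈ ZFSet.sUnion (ZFSet.sUnion S) := by
  refine ZFSet.mem_sUnion.2 ⟨{x}, ZFSet.mem_sUnion.2 ⟨ZFSet.pair x y, h, ?_⟩,
    ZFSet.mem_singleton.2 rfl⟩
  simp [ZFSet.pair]

lemma pair_mem_uu_right {x y S : ZFSet} (h : ZFSet.pair x y ∈ S) :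
    y ∈ ZFSet.sUnion (ZFSet.sUnion S) := by
  refine ZFSet.mem_sUnion.2 ⟨{x, y}, ZFSet.mem_sUnion.2 ⟨ZFSet.pair x y, h, ?_⟩, ?_⟩
  · simp [ZFSet.pair]
  · simp

/-- The restriction of a collapse of `A` to the carrier of an initial
subgraph `G` of `A` is a collapse of `G`. -/
theorem collapse_iseg (A G φ : ZFSet) (hA : IsGraph A)
    (hφ : IsCollapse A φ) (hG : ISeg G A) :
    IsCollapse G (restrict φ (Car G)) := by
  obtain ⟨⟨hφpairs, hφfun⟩, hdom, hcol⟩ := hφ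
  obtain ⟨hGgraph, hGA, hGinit⟩ := hG
  have memψ : ∀ x y, ZFSet.pair x y ∈ restrict φ (Car G) ↔
      ZFSet.pair x y ∈ φ ∧ x ∈ Car G := by
    intro x y
    constructor
    · intro h
      rw [restrict, ZFSet.mem_sep] at h
      obtain ⟨hmem, u, v, heq, hu⟩ := h
      obtain ⟨rfl, rfl⟩ := ZFSet.pair_injective heq
      exact ⟨hmem, hu⟩
    · rintro ⟨h1, h2⟩
      exact ZFSet.mem_sep.2 ⟨h1, x, y, rfl, h2⟩
  have carGA : ∀ x, x ∈ Car G → x ∈ Car A := by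
    intro x hx
    rw [Car, ZFSet.mem_sep] at hx ⊢
    obtain ⟨_, y, hy⟩ := hx
    rcases hy with hy | hy
    · exact ⟨pair_mem_uu_left (hGA hy), y, Or.inl (hGA hy)⟩
    · exact ⟨pair_mem_uu_right (hGA hy), y, Or.inr (hGA hy)⟩
  refine ⟨⟨?_, ?_⟩, ?_, ?_⟩
  · intro c hc
    rw [restrict, ZFSet.mem_sep] at hc
    obtain ⟨_, u, v, heq, _⟩ := hc
    exact ⟨u, v, heq⟩
  · intro x y y' h1 h2
    exact hφfun x y y' ((memψ x y).1 h1).1 ((memψ x y').1 h2).1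
  · apply ZFSet.ext
    intro x
    rw [Dom, ZFSet.mem_sep]
    constructor
    · rintro ⟨_, y, hy⟩
      exact ((memψ x y).1 hy).2
    · intro hx
      have hxA : x ∈ Dom φ := hdom ▸ carGA x hx
      rw [Dom, ZFSet.mem_sep] at hxA
      obtain ⟨_, y, hy⟩ := hxA
      have : ZFSet.pair x y ∈ restrict φ (Car G) := (memψ x y).2 ⟨hy, hx⟩
      exact ⟨pair_mem_uu_left this, y, this⟩
  · intro i y y'
    constructor
    · rintro ⟨hyy, hiy⟩
      obtain ⟨hiyφ, hiG⟩ := (memψ i y).1 hiy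
      obtain ⟨i', hi'A, hi'φ⟩ := (hcol i y y').1 ⟨hyy, hiyφ⟩
      have hi'G : ZFSet.pair i' i ∈ G := hGinit i' i hi'A hiG
      have hi'Car : i' ∈ Car G := by
        rw [Car, ZFSet.mem_sep]
        exact ⟨pair_mem_uu_left hi'G, i, Or.inl hi'G⟩
      exact ⟨i', hi'G, (memψ i' y').2 ⟨hi'φ, hi'Car⟩⟩
    · rintro ⟨i', hi'G, hi'ψ⟩
      obtain ⟨hi'φ, _⟩ := (memψ i' y').1 hi'ψ
      obtain ⟨hyy, hiyφ⟩ := (hcol i y y').2 ⟨i', hGA hi'G, hi'φ⟩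
      have hiCar : i ∈ Car G := by
        rw [Car, ZFSet.mem_sep]
        exact ⟨pair_mem_uu_right hi'G, i', Or.inr hi'G⟩
      exact ⟨hyy, (memψ i y).2 ⟨hiyφ, hiCar⟩⟩
end

section
/- Graph membership ε is invariant under bisimilarity in both arguments: for pointed graphs g, g', h, h': (i) if g ε h and g ≈ g' then g' ε h; (ii) if g ε h and h ≈ h' then g ε h'. -/
/-- Graph membership: `⟨A,a⟩ ε ⟨B,b⟩`. -/
def Eps (A a B b : ZFSet) : Prop :=
  ∃ x, ZFSet.pair x b ∈ B ∧ Bisim A a B x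

lemma mem_dom' {r x y : ZFSet} (h : ZFSet.pair x y ∈ r) : x ∈ Dom r := by
  rw [Dom, ZFSet.mem_sep]
  refine ⟨?_, y, h⟩
  rw [ZFSet.mem_sUnion]
  refine ⟨{x}, ?_, by simp⟩
  rw [ZFSet.mem_sUnion]
  exact ⟨_, h, by simp [ZFSet.pair]⟩

lemma mem_cod' {r x y : ZFSet} (h : ZFSet.pair x y ∈ r) : y ∈ Cod r := by
  rw [Cod, ZFSet.mem_sep]
  refine ⟨?_, x, h⟩
  rw [ZFSet.mem_sUnion]
  refine ⟨{x, y}, ?_, by simp⟩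
  rw [ZFSet.mem_sUnion]
  exact ⟨_, h, by simp [ZFSet.pair]⟩

/-- Converse relation. -/
def Conv (r : ZFSet) : ZFSet :=
  ZFSet.pairSep (fun y x => ZFSet.pair x y ∈ r) (Cod r) (Dom r)

lemma mem_conv {r x y : ZFSet} : ZFSet.pair y x ∈ Conv r ↔ ZFSet.pair x y ∈ r := by
  rw [Conv, ZFSet.mem_pairSep]
  constructor
  · rintro ⟨a, _, b, _, hp, h⟩
    obtain ⟨rfl, rfl⟩ := ZFSet.pair_injective hp
    exact h
  · intro h
    exact ⟨y, mem_cod' h, x, mem_dom' h, rfl, h⟩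

/-- Composition of relations. -/
def Comp (r s : ZFSet) : ZFSet :=
  ZFSet.pairSep (fun x z => ∃ y, ZFSet.pair x y ∈ r ∧ ZFSet.pair y z ∈ s)
    (Dom r) (Cod s)

lemma mem_comp {r s x z : ZFSet} :
    ZFSet.pair x z ∈ Comp r s ↔ ∃ y, ZFSet.pair x y ∈ r ∧ ZFSet.pair y z ∈ s := by
  rw [Comp, ZFSet.mem_pairSep]
  constructor
  · rintro ⟨a, _, b, _, hp, h⟩
    obtain ⟨rfl, rfl⟩ := ZFSet.pair_injective hp
    exact h
  · rintro ⟨y, h1, h2⟩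
    exact ⟨x, mem_dom' h1, z, mem_cod' h2, rfl, y, h1, h2⟩

lemma bisim_symm {A a B b : ZFSet} (h : Bisim A a B b) : Bisim B b A a := by
  obtain ⟨r, hab, h1, h2⟩ := h
  refine ⟨Conv r, mem_conv.mpr hab, ?_, ?_⟩
  · intro x x' y hx hxy
    obtain ⟨y', hy', hr⟩ := h2 x x' y hx (mem_conv.mp hxy)
    exact ⟨y', hy', mem_conv.mpr hr⟩
  · intro y y' x hy hxy
    obtain ⟨x', hx', hr⟩ := h1 y y' x hy (mem_conv.mp hxy)
    exact ⟨x', hx', mem_conv.mpr hr⟩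

lemma bisim_trans {A a B b C c : ZFSet} (h : Bisim A a B b) (h' : Bisim B b C c) :
    Bisim A a C c := by
  obtain ⟨r, hab, h1, h2⟩ := h
  obtain ⟨s, hbc, h1', h2'⟩ := h'
  refine ⟨Comp r s, mem_comp.mpr ⟨b, hab, hbc⟩, ?_, ?_⟩
  · intro x x' y hx hxy
    obtain ⟨m, hxm, hmy⟩ := mem_comp.mp hxy
    obtain ⟨m', hm', hr⟩ := h1 x x' m hx hxm
    obtain ⟨y', hy', hs⟩ := h1' m m' y hm' hmy
    exact ⟨y', hy', mem_comp.mpr ⟨m', hr, hs⟩⟩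
  · intro y y' x hy hxy
    obtain ⟨m, hxm, hmy⟩ := mem_comp.mp hxy
    obtain ⟨m', hm', hs⟩ := h2' y y' m hy hmy
    obtain ⟨x', hx', hr⟩ := h2 m m' x hm' hxm
    exact ⟨x', hx', mem_comp.mpr ⟨m', hr, hs⟩⟩

/-- Graph membership is invariant under bisimilarity in both arguments. -/
theorem eps_invariant :
    (∀ A a B b A' a' : ZFSet, IsGraph A → IsGraph B → IsGraph A' →
      Eps A a B b → Bisim A a A' a' → Eps A' a' B b) ∧
    (∀ A a B b B' b' : ZFSet, IsGraph A → IsGraph B → IsGraph B' →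
      Eps A a B b → Bisim B b B' b' → Eps A a B' b') := by
  constructor
  · rintro A a B b A' a' _ _ _ ⟨x, hxb, hbis⟩ hAA'
    exact ⟨x, hxb, bisim_trans (bisim_symm hAA') hbis⟩
  · rintro A a B b B' b' _ _ _ ⟨x, hxb, hbis⟩ ⟨s, hbb', h1, h2⟩
    obtain ⟨x', hx', hs⟩ := h1 b x b' hxb hbb'
    exact ⟨x', hx', bisim_trans hbis ⟨s, hs, h1, h2⟩⟩
end
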